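/- Let n ≥ 2 and let 1 ≤ r ≤ n−1. Then Σ_{σ ∈ S_n} fix(σ)^r · (fix(σ) − 1) = n! · Σ_{i=1}^{r} i · S(r,i). Representation-theoretically, this says the multiplicity of the standard ((n−1)-dimensional) irreducible representation S^{(n−1,1)} of S_n in the r-th tensor power of the n-dimensional permutation representation equals Σ_{i=1}^{r} i · S(r,i). -/

import Mathlib

/-!
Burnside's lemma for the action of `Perm α` on the injections `Fin k ↪ α`, which is transitive
when `k ≤ |α|`, shows that the falling factorial `(fix σ)_k` averages to `1` over `Perm α`.
Expanding `x ^ m = ∑ₖ S(m, k) (x)_k` then shows that the `m`-th moment of `fix` is the Bell number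
`Bₘ = ∑ₖ S(m, k)` for `m ≤ |α|`. The theorem is `B_{r+1} - B_r = ∑ₖ k S(r, k)`, which is the
Stirling recurrence summed over `k`.
-/

/-- Stirling numbers of the second kind. -/
def stirling : ℕ → ℕ → ℕ
  | 0, 0 => 1
  | 0, _ + 1 => 0
  | _ + 1, 0 => 0
  | n + 1, k + 1 => (k + 1) * stirling n (k + 1) + stirling n k

/-- The number of fixed points of a permutation of `Fin n`. -/
def fixCount {n : ℕ} (σ : Equiv.Perm (Fin n)) : ℕ :=
  (Finset.univ.filter fun x => σ x = x).card

open Finset Equiv MulAction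

theorem stirling_eq_stirlingSecond : ∀ m k : ℕ, stirling m k = Nat.stirlingSecond m k
  | 0, 0 | 0, _ + 1 | _ + 1, 0 => rfl
  | m + 1, k + 1 => by
    rw [stirling, Nat.stirlingSecond_succ_succ, stirling_eq_stirlingSecond m (k + 1),
      stirling_eq_stirlingSecond m k]

namespace Nat

theorem sum_range_stirlingSecond_succ_mul (m : ℕ) (f : ℕ → ℕ) :
    ∑ k ∈ range (m + 2), stirlingSecond (m + 1) k * f k =
      ∑ k ∈ range (m + 1), stirlingSecond m k * (f (k + 1) + k * f k) := by
  have hshift : ∑ k ∈ range (m + 1), (k + 1) * stirlingSecond m (k + 1) * f (k + 1) =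
      ∑ k ∈ range (m + 1), stirlingSecond m k * (k * f k) := by
    have := sum_range_succ' (fun k => k * stirlingSecond m k * f k) (m + 1)
    rw [sum_range_succ, stirlingSecond_eq_zero_of_lt (lt_add_one m)] at this
    simpa [mul_left_comm, mul_assoc] using this.symm
  calc ∑ k ∈ range (m + 2), stirlingSecond (m + 1) k * f k
      = ∑ k ∈ range (m + 1), ((k + 1) * stirlingSecond m (k + 1) * f (k + 1) +
          stirlingSecond m k * f (k + 1)) := by
        rw [sum_range_succ', stirlingSecond_succ_zero, zero_mul, add_zero]
        exact sum_congr rfl fun k _ => by rw [stirlingSecond_succ_succ, add_mul]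
    _ = ∑ k ∈ range (m + 1), stirlingSecond m k * (f (k + 1) + k * f k) := by
        rw [sum_add_distrib, hshift, add_comm, ← sum_add_distrib]
        simp only [mul_add]

theorem descFactorial_mul_self (x k : ℕ) :
    x.descFactorial k * x = x.descFactorial (k + 1) + k * x.descFactorial k := by
  rcases le_or_gt k x with hkx | hxk
  · rw [descFactorial_succ, ← add_mul, Nat.sub_add_cancel hkx, mul_comm]
  · rw [descFactorial_eq_zero_iff_lt.mpr hxk, descFactorial_eq_zero_iff_lt.mpr (by omega)]
    simp

theorem pow_eq_sum_stirlingSecond_mul_descFactorial (x m : ℕ) :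
    x ^ m = ∑ k ∈ range (m + 1), stirlingSecond m k * x.descFactorial k := by
  induction m with
  | zero => simp
  | succ m ih =>
    rw [sum_range_stirlingSecond_succ_mul, pow_succ, ih, sum_mul]
    exact sum_congr rfl fun k _ => by rw [mul_assoc, descFactorial_mul_self]

theorem sum_range_stirlingSecond_succ (r : ℕ) :
    ∑ k ∈ range (r + 2), stirlingSecond (r + 1) k =
      ∑ k ∈ range (r + 1), stirlingSecond r k + ∑ k ∈ Icc 1 r, k * stirlingSecond r k := by
  have hdrop : ∑ k ∈ range (r + 1), k * stirlingSecond r k =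
      ∑ k ∈ Icc 1 r, k * stirlingSecond r k := by
    rw [range_eq_Ico, sum_eq_sum_Ico_succ_bot r.succ_pos, zero_mul, zero_add,
      ← Ico_add_one_right_eq_Icc]
    rfl
  simpa [← hdrop, mul_add, sum_add_distrib, mul_comm] using
    sum_range_stirlingSecond_succ_mul r fun _ => 1

end Nat

section FixedPoints

variable {α : Type*}

theorem mem_fixedBy_embedding_iff {ι : Type*} {σ : Perm α} {f : ι ↪ α} :
    f ∈ fixedBy (ι ↪ α) σ ↔ ∀ i, σ (f i) = f i := by
  simp [mem_fixedBy, DFunLike.ext_iff, Function.Embedding.smul_apply, Perm.smul_def]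

def fixedByEmbeddingEquiv (ι : Type*) (σ : Perm α) :
    fixedBy (ι ↪ α) σ ≃ (ι ↪ {x // σ x = x}) where
  toFun f := ⟨fun i => ⟨f.1 i, mem_fixedBy_embedding_iff.mp f.2 i⟩,
    fun _ _ h => f.1.injective (congrArg Subtype.val h)⟩
  invFun g := ⟨g.trans (Function.Embedding.subtype _),
    mem_fixedBy_embedding_iff.mpr fun i => (g i).2⟩
  left_inv _ := rfl
  right_inv _ := rfl

variable [Fintype α] [DecidableEq α]

theorem sum_descFactorial_card_fixedPoints {k : ℕ} (hk : k ≤ Fintype.card α) :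
    ∑ σ : Perm α, (#{x | σ x = x}).descFactorial k = (Fintype.card α).factorial := by
  have : IsPretransitive (Perm α) (Fin k ↪ α) := Perm.isMultiplyPretransitive α k
  have : Nonempty (Fin k ↪ α) := Function.Embedding.nonempty_of_card_le (by simpa using hk)
  have : Unique (orbitRel.Quotient (Perm α) (Fin k ↪ α)) :=
    ((pretransitive_iff_unique_quotient_of_nonempty _ _).mp ‹_›).some
  have burnside := sum_card_fixedBy_eq_card_orbits_mul_card_group (Perm α) (Fin k ↪ α)
  rw [Fintype.card_unique, one_mul, Fintype.card_perm] at burnside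
  rw [← burnside]
  refine sum_congr rfl fun σ _ => ?_
  rw [Fintype.card_congr (fixedByEmbeddingEquiv _ σ), Fintype.card_embedding_eq,
    Fintype.card_fin, Fintype.card_subtype]

theorem sum_card_fixedPoints_pow {m : ℕ} (hm : m ≤ Fintype.card α) :
    ∑ σ : Perm α, #{x | σ x = x} ^ m =
      (Fintype.card α).factorial * ∑ k ∈ range (m + 1), Nat.stirlingSecond m k := by
  simp_rw [Nat.pow_eq_sum_stirlingSecond_mul_descFactorial _ m]
  rw [sum_comm, mul_sum]
  refine sum_congr rfl fun k hk => ?_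
  rw [← mul_sum, sum_descFactorial_card_fixedPoints (by rw [mem_range] at hk; omega), mul_comm]

end FixedPoints

theorem multiplicity_standard_in_tensor_power_general (n r : ℕ) (hn : 2 ≤ n)
    (hrn : r ≤ n - 1) :
    ∑ σ : Equiv.Perm (Fin n), (fixCount σ : ℤ) ^ r * ((fixCount σ : ℤ) - 1) =
      (Nat.factorial n : ℤ) * ∑ i ∈ Finset.Icc 1 r, (i : ℤ) * (stirling r i : ℤ) := by
  have moment : ∀ m ≤ n, ∑ σ : Perm (Fin n), (fixCount σ : ℤ) ^ m =
      n.factorial * ∑ k ∈ range (m + 1), (Nat.stirlingSecond m k : ℤ) := fun m hm => by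
    have h := sum_card_fixedPoints_pow (α := Fin n) (m := m) (by rwa [Fintype.card_fin])
    rw [Fintype.card_fin] at h
    exact_mod_cast h
  calc ∑ σ : Perm (Fin n), (fixCount σ : ℤ) ^ r * ((fixCount σ : ℤ) - 1)
      = ∑ σ : Perm (Fin n), (fixCount σ : ℤ) ^ (r + 1) -
          ∑ σ : Perm (Fin n), (fixCount σ : ℤ) ^ r := by
        rw [← sum_sub_distrib]
        exact sum_congr rfl fun σ _ => by ring
    _ = n.factorial * ∑ i ∈ Icc 1 r, (i : ℤ) * (stirling r i : ℤ) := by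
        rw [moment (r + 1) (by omega), moment r (by omega)]
        simp_rw [stirling_eq_stirlingSecond]
        have bell := congrArg (Nat.cast : ℕ → ℤ) (Nat.sum_range_stirlingSecond_succ r)
        push_cast at bell
        rw [bell]
        ring

theorem multiplicity_standard_in_tensor_power (n r : ℕ) (hn : 2 ≤ n)
    (hr1 : 1 ≤ r) (hrn : r ≤ n - 1) :
    ∑ σ : Equiv.Perm (Fin n), (fixCount σ : ℤ) ^ r * ((fixCount σ : ℤ) - 1) =
      (Nat.factorial n : ℤ) * ∑ i ∈ Finset.Icc 1 r, (i : ℤ) * (stirling r i : ℤ) :=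
  multiplicity_standard_in_tensor_power_general n r hn hrn
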